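/- For |q|<1 and |ζ|<1 with ζq^{2m} ≠ 1 for all m ≥ 1: (1+q) Σ_{n≥0} (−q)^n/(ζq²;q²)_n = Σ_{n≥0} (−qζ)^n q^{2n²} / ((ζq²;q²)_n (−q³;q²)_n), i.e., (1+q) F(0,ζ;−q;q²) = R(ζ,−q;q²). -/

import Mathlib

open Complex

/-- The q-Pochhammer symbol `(a;q)_n = ∏_{j=0}^{n-1} (1 - a q^j)`. -/
noncomputable def qPoch (a q : ℂ) (n : ℕ) : ℂ := ∏ j ∈ Finset.range n, (1 - a * q ^ j)

/-!
Fine's function `F(b,t) = ∑ tⁿ/(bq;q)ₙ` satisfies, by comparing consecutive terms, the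
functional equation `(1 - t) F(b,t) = 1 + bqt/(1 - bq) · F(bq,tq)`. Iterating it `n` times writes
`(1 - t) F(b,t)` as the first `n` terms of `R(b,t;q)` plus the remainder
`Tₙ · (1 - tqⁿ) F(bqⁿ,tqⁿ)`, where `Tₙ` is the `n`-th term of `R`. The symbols `(aq;q)ₙ` are
bounded away from `0` uniformly in `n` and in `‖a‖ ≤ 1` (compare `log (1 - u) ≥ -u/(1 - u)` with a
geometric series), so `F(bqⁿ,tqⁿ)` stays bounded while `Tₙ → 0`.
-/

open Filter Topology Finset

@[simp]
lemma qPoch_zero (a q : ℂ) : qPoch a q 0 = 1 := prod_range_zero _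

lemma qPoch_succ (a q : ℂ) (n : ℕ) : qPoch a q (n + 1) = qPoch a q n * (1 - a * q ^ n) :=
  prod_range_succ _ _

lemma qPoch_succ' (a q : ℂ) (n : ℕ) : qPoch a q (n + 1) = (1 - a) * qPoch (a * q) q n := by
  simp only [qPoch, prod_range_succ', pow_zero, mul_one, pow_succ', mul_assoc, mul_comm]

lemma Real.exp_neg_div_le_one_sub {u r : ℝ} (hu : 0 ≤ u) (hur : u ≤ r) (hr : r < 1) :
    Real.exp (-(u / (1 - r))) ≤ 1 - u := by
  have hu1 : 0 < 1 - u := by linarith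
  calc Real.exp (-(u / (1 - r))) ≤ Real.exp (1 - (1 - u)⁻¹) := by
        have : 1 - (1 - u)⁻¹ = -(u / (1 - u)) := by field_simp; ring
        rw [this]
        gcongr
    _ ≤ Real.exp (Real.log (1 - u)) := by gcongr; exact Real.one_sub_inv_le_log_of_pos hu1
    _ = 1 - u := Real.exp_log hu1

lemma exp_neg_le_norm_qPoch {a q : ℂ} {r : ℝ} (hq : ‖q‖ < 1) (ha : ‖a‖ ≤ r) (hr : r < 1)
    (n : ℕ) : Real.exp (-(r / ((1 - r) * (1 - ‖q‖)))) ≤ ‖qPoch a q n‖ := by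
  have hfactor : ∀ j, ‖a‖ * ‖q‖ ^ j ≤ r := fun j =>
    (mul_le_of_le_one_right (norm_nonneg a) (pow_le_one₀ (norm_nonneg q) hq.le)).trans ha
  have hgeom : ∑ j ∈ range n, ‖a‖ * ‖q‖ ^ j ≤ r / (1 - ‖q‖) := by
    rw [← mul_sum, div_eq_mul_one_div r]
    gcongr
    · exact (norm_nonneg a).trans ha
    · simpa using geom_sum_Ico_le_of_lt_one (m := 0) (n := n) (norm_nonneg q) hq
  calc Real.exp (-(r / ((1 - r) * (1 - ‖q‖))))
      ≤ Real.exp (∑ j ∈ range n, -(‖a‖ * ‖q‖ ^ j / (1 - r))) := by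
        rw [sum_neg_distrib, ← sum_div, mul_comm, ← div_div]
        gcongr
    _ = ∏ j ∈ range n, Real.exp (-(‖a‖ * ‖q‖ ^ j / (1 - r))) := Real.exp_sum _ _
    _ ≤ ∏ j ∈ range n, (1 - ‖a‖ * ‖q‖ ^ j) :=
        prod_le_prod (fun _ _ => (Real.exp_pos _).le)
          (fun j _ => Real.exp_neg_div_le_one_sub (by positivity) (hfactor j) hr)
    _ ≤ ∏ j ∈ range n, ‖1 - a * q ^ j‖ := by
        refine prod_le_prod (fun j _ => by linarith [hfactor j]) (fun j _ => ?_)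
        simpa [norm_mul, norm_pow] using norm_sub_norm_le (1 : ℂ) (a * q ^ j)
    _ = ‖qPoch a q n‖ := (norm_prod _ _).symm

lemma qPoch_ne_zero {a q : ℂ} (ha : ‖a‖ < 1) (hq : ‖q‖ < 1) (n : ℕ) : qPoch a q n ≠ 0 :=
  norm_pos_iff.1 <| (Real.exp_pos _).trans_le (exp_neg_le_norm_qPoch hq le_rfl ha n)

lemma norm_mul_le_of_norm_le_one {a q : ℂ} (ha : ‖a‖ ≤ 1) : ‖a * q‖ ≤ ‖q‖ := by
  rw [norm_mul]; exact mul_le_of_le_one_left (norm_nonneg q) ha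

lemma exists_norm_inv_qPoch_le {q : ℂ} (hq : ‖q‖ < 1) :
    ∃ C, ∀ a : ℂ, ‖a‖ ≤ 1 → ∀ n, ‖(qPoch (a * q) q n)⁻¹‖ ≤ C :=
  ⟨_, fun _ ha n => by
    rw [norm_inv]
    exact inv_anti₀ (Real.exp_pos _)
      (exp_neg_le_norm_qPoch hq (norm_mul_le_of_norm_le_one ha) hq n)⟩

lemma norm_mul_pow_le {a q : ℂ} (hq : ‖q‖ ≤ 1) (n : ℕ) : ‖a * q ^ n‖ ≤ ‖a‖ := by
  rw [norm_mul, norm_pow]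
  exact mul_le_of_le_one_right (norm_nonneg a) (pow_le_one₀ (norm_nonneg q) hq)

/-- Fine's `F(0,b;t;q)`. -/
noncomputable def fineF (b t q : ℂ) : ℂ := ∑' n : ℕ, t ^ n / qPoch (b * q) q n

/-- The `n`-th term of `R(b,t;q)`. -/
noncomputable def rogersFineTerm (b t q : ℂ) (n : ℕ) : ℂ :=
  (b * t) ^ n * q ^ (n ^ 2) / (qPoch (b * q) q n * qPoch (t * q) q n)

/-- `(1 - t) F(0,b;t;q)` minus the first `n` terms of `R(b,t;q)`. -/
noncomputable def rogersFineRemainder (b t q : ℂ) (n : ℕ) : ℂ :=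
  rogersFineTerm b t q n * ((1 - t * q ^ n) * fineF (b * q ^ n) (t * q ^ n) q)

section
variable {b t q : ℂ} {C : ℝ}

lemma norm_pow_div_qPoch_le (hC : ∀ a : ℂ, ‖a‖ ≤ 1 → ∀ n, ‖(qPoch (a * q) q n)⁻¹‖ ≤ C)
    (hb : ‖b‖ ≤ 1) (n : ℕ) : ‖t ^ n / qPoch (b * q) q n‖ ≤ C * ‖t‖ ^ n := by
  rw [div_eq_mul_inv, norm_mul, norm_pow, mul_comm]
  gcongr
  exact hC b hb n

lemma summable_pow_div_qPoch (hq : ‖q‖ < 1) (hb : ‖b‖ ≤ 1) (ht : ‖t‖ < 1) :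
    Summable fun n => t ^ n / qPoch (b * q) q n := by
  obtain ⟨C, hC⟩ := exists_norm_inv_qPoch_le hq
  exact .of_norm_bounded ((summable_geometric_of_lt_one (norm_nonneg t) ht).mul_left C)
    (norm_pow_div_qPoch_le hC hb)

lemma norm_fineF_le (hC : ∀ a : ℂ, ‖a‖ ≤ 1 → ∀ n, ‖(qPoch (a * q) q n)⁻¹‖ ≤ C)
    (hb : ‖b‖ ≤ 1) {s : ℝ} (ht : ‖t‖ ≤ s) (hs : s < 1) : ‖fineF b t q‖ ≤ C * (1 - s)⁻¹ :=
  tsum_of_norm_bounded ((hasSum_geometric_of_lt_one ((norm_nonneg t).trans ht) hs).mul_left C)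
    fun n => (norm_pow_div_qPoch_le hC hb n).trans <| by
      gcongr
      exact (norm_nonneg _).trans (hC b hb 0)

theorem fineF_functional_eq (hq : ‖q‖ < 1) (hb : ‖b‖ ≤ 1) (ht : ‖t‖ < 1) :
    (1 - t) * fineF b t q = 1 + b * q * t / (1 - b * q) * fineF (b * q) (t * q) q := by
  set f : ℕ → ℂ := fun n => t ^ n / qPoch (b * q) q n with hf_def
  have hf : Summable f := summable_pow_div_qPoch hq hb ht
  have hbq : ‖b * q‖ < 1 := (norm_mul_le_of_norm_le_one hb).trans_lt hq
  have hstep : ∀ n, f (n + 1) - t * f n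
      = b * q * t / (1 - b * q) * ((t * q) ^ n / qPoch (b * q * q) q n) := by
    intro n
    have hbq' : 1 - b * q ≠ 0 := sub_ne_zero.2 fun h => by simp [← h] at hbq
    obtain ⟨hP, hA⟩ := mul_ne_zero_iff.1 <| qPoch_succ (b * q) q n ▸ qPoch_ne_zero hbq hq (n + 1)
    have hshift :
        qPoch (b * q * q) q n = qPoch (b * q) q n * (1 - b * q * q ^ n) / (1 - b * q) := by
      rw [eq_div_iff hbq', ← qPoch_succ, qPoch_succ', mul_comm]
    rw [hshift, hf_def]
    simp only [qPoch_succ]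
    field_simp
    ring
  calc (1 - t) * fineF b t q = (f 0 + ∑' n, f (n + 1)) - ∑' n, t * f n := by
        rw [fineF, ← hf.tsum_eq_zero_add, tsum_mul_left]; ring
    _ = 1 + ∑' n, (f (n + 1) - t * f n) := by
        rw [Summable.tsum_sub ((summable_nat_add_iff 1).2 hf) (hf.mul_left t)]
        simp [hf_def]; ring
    _ = 1 + b * q * t / (1 - b * q) * fineF (b * q) (t * q) q := by
        simp_rw [hstep]; rw [tsum_mul_left, fineF]

lemma norm_rogersFineTerm_le (hC : ∀ a : ℂ, ‖a‖ ≤ 1 → ∀ n, ‖(qPoch (a * q) q n)⁻¹‖ ≤ C)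
    (hq : ‖q‖ < 1) (hb : ‖b‖ ≤ 1) (ht : ‖t‖ ≤ 1) (n : ℕ) :
    ‖rogersFineTerm b t q n‖ ≤ C * C * ‖t‖ ^ n := by
  rw [rogersFineTerm, div_eq_mul_inv, mul_inv, norm_mul, norm_mul, norm_mul, norm_pow, norm_pow,
    norm_mul, mul_pow]
  have hbn : ‖b‖ ^ n ≤ 1 := pow_le_one₀ (norm_nonneg b) hb
  have hqn : ‖q‖ ^ n ^ 2 ≤ 1 := pow_le_one₀ (norm_nonneg q) hq.le
  calc ‖b‖ ^ n * ‖t‖ ^ n * ‖q‖ ^ n ^ 2 * (‖(qPoch (b * q) q n)⁻¹‖ * ‖(qPoch (t * q) q n)⁻¹‖)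
      ≤ 1 * ‖t‖ ^ n * 1 * (C * C) := by
        gcongr
        exacts [(norm_nonneg _).trans (hC b hb n), hC b hb n, hC t ht n]
    _ = C * C * ‖t‖ ^ n := by ring

lemma rogersFineTerm_succ_mul (hq : ‖q‖ < 1) (hb : ‖b‖ ≤ 1) (ht : ‖t‖ ≤ 1) (n : ℕ) :
    rogersFineTerm b t q (n + 1) * (1 - t * q ^ (n + 1))
      = rogersFineTerm b t q n * (b * q ^ (n + 1) * (t * q ^ n) / (1 - b * q ^ (n + 1))) := by
  have hb' := qPoch_ne_zero ((norm_mul_le_of_norm_le_one hb).trans_lt hq) hq (n + 1)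
  have ht' := qPoch_ne_zero ((norm_mul_le_of_norm_le_one ht).trans_lt hq) hq (n + 1)
  simp only [rogersFineTerm, qPoch_succ, mul_assoc, ← pow_succ'] at hb' ht' ⊢
  obtain ⟨hb₁, hb₂⟩ := mul_ne_zero_iff.1 hb'
  obtain ⟨ht₁, ht₂⟩ := mul_ne_zero_iff.1 ht'
  field_simp
  ring

lemma rogersFineRemainder_eq_add (hq : ‖q‖ < 1) (hb : ‖b‖ ≤ 1) (ht : ‖t‖ < 1) (n : ℕ) :
    rogersFineRemainder b t q n = rogersFineTerm b t q n + rogersFineRemainder b t q (n + 1) := by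
  have hFE := fineF_functional_eq hq ((norm_mul_pow_le hq.le n).trans hb)
    ((norm_mul_pow_le hq.le n).trans_lt ht)
  simp only [mul_assoc, ← pow_succ] at hFE
  rw [rogersFineRemainder, rogersFineRemainder, hFE, ← mul_assoc (rogersFineTerm b t q (n + 1)),
    rogersFineTerm_succ_mul hq hb ht.le]
  ring

theorem hasSum_rogersFineTerm (hq : ‖q‖ < 1) (hb : ‖b‖ ≤ 1) (ht : ‖t‖ < 1) :
    HasSum (rogersFineTerm b t q) ((1 - t) * fineF b t q) := by
  obtain ⟨C, hC⟩ := exists_norm_inv_qPoch_le hq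
  have hT : Summable (rogersFineTerm b t q) :=
    .of_norm_bounded ((summable_geometric_of_lt_one (norm_nonneg t) ht).mul_left (C * C))
      (norm_rogersFineTerm_le hC hq hb ht.le)
  have hbounded : ∀ n, ‖(1 - t * q ^ n) * fineF (b * q ^ n) (t * q ^ n) q‖
      ≤ 2 * (C * (1 - ‖t‖)⁻¹) := fun n => by
    rw [norm_mul]
    gcongr
    · exact (norm_sub_le _ _).trans
        (by linarith [norm_one (α := ℂ), norm_mul_pow_le (a := t) hq.le n])
    · exact norm_fineF_le hC ((norm_mul_pow_le hq.le n).trans hb) (norm_mul_pow_le hq.le n) ht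
  have hR : Tendsto (rogersFineRemainder b t q) atTop (𝓝 0) :=
    hT.tendsto_atTop_zero.zero_mul_isBoundedUnder_le (isBoundedUnder_of ⟨_, hbounded⟩)
  have hpartial : ∀ n, ∑ k ∈ range n, rogersFineTerm b t q k
      = rogersFineRemainder b t q 0 - rogersFineRemainder b t q n := fun n => by
    rw [← sum_range_sub']
    exact sum_congr rfl fun k _ => eq_sub_of_add_eq (rogersFineRemainder_eq_add hq hb ht k).symm
  have hR0 : rogersFineRemainder b t q 0 = (1 - t) * fineF b t q := by
    simp [rogersFineRemainder, rogersFineTerm]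
  have hlim : Tendsto (fun n => ∑ k ∈ range n, rogersFineTerm b t q k) atTop
      (𝓝 ((1 - t) * fineF b t q)) := by
    simpa [hpartial, hR0] using tendsto_const_nhds.sub hR
  rw [← tendsto_nhds_unique hT.hasSum.tendsto_sum_nat hlim]
  exact hT.hasSum

end

theorem fine_twelve_three_general (q ζ : ℂ) (hq1 : ‖q‖ < 1)
    (hζ : ‖ζ‖ < 1) :
    (1 + q) * ∑' n : ℕ, (-q) ^ n / qPoch (ζ * q ^ 2) (q ^ 2) n
      = ∑' n : ℕ, (-q * ζ) ^ n * q ^ (2 * n ^ 2) /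
          (qPoch (ζ * q ^ 2) (q ^ 2) n * qPoch (-q ^ 3) (q ^ 2) n) := by
  have hq2 : ‖q ^ 2‖ < 1 := by rw [norm_pow]; exact pow_lt_one₀ (norm_nonneg q) hq1 two_ne_zero
  have key := (hasSum_rogersFineTerm hq2 hζ.le (t := -q) (by rwa [norm_neg])).tsum_eq
  rw [← sub_neg_eq_add]
  refine key.symm.trans (tsum_congr fun n => ?_)
  rw [rogersFineTerm, ← pow_mul, mul_comm ζ, show -q * q ^ 2 = -q ^ 3 by ring]

/-- `(1+q) F(0,ζ;−q;q²) = R(ζ,−q;q²)`, i.e.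
`(1+q) Σ_{n≥0} (−q)^n/(ζq²;q²)_n = Σ_{n≥0} (−qζ)^n q^{2n²}/((ζq²;q²)_n (−q³;q²)_n)`. -/
theorem fine_twelve_three (q ζ : ℂ) (hq0 : 0 < ‖q‖) (hq1 : ‖q‖ < 1)
    (hζ : ‖ζ‖ < 1) (hζq : ∀ m : ℕ, 1 ≤ m → ζ * q ^ (2 * m) ≠ 1) :
    (1 + q) * ∑' n : ℕ, (-q) ^ n / qPoch (ζ * q ^ 2) (q ^ 2) n
      = ∑' n : ℕ, (-q * ζ) ^ n * q ^ (2 * n ^ 2) /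
          (qPoch (ζ * q ^ 2) (q ^ 2) n * qPoch (-q ^ 3) (q ^ 2) n) :=
  fine_twelve_three_general q ζ hq1 hζ
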